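/- Deterministic approximate-storage lower bound: if a deterministic scheme with s-bit tables and kt-probe decision-tree queries correctly answers membership for at least half of all n-element subsets of an m-element universe, then (1/2)·binom(m,n) ≤ ∑_{i=0}^{nk} binom(s,i) where k is the number of probes per query, and hence (1/2)(m/n)^n ≤ (e(s+nk)/(nk))^{nk}. -/

import Mathlib

inductive BDTree (s : ℕ) where
  | leaf : Bool → BDTree s
  | node : Fin s → BDTree s → BDTree s → BDTree s

def BDTree.eval {s : ℕ} : BDTree s → (Fin s → Bool) → Bool
  | .leaf b, _ => b
  | .node i t₀ t₁, x => if x i then t₁.eval x else t₀.eval x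

def BDTree.depth {s : ℕ} : BDTree s → ℕ
  | .leaf _ => 0
  | .node _ t₀ t₁ => max t₀.depth t₁.depth + 1

/-!
Polynomial method. Over a commutative ring, the `0/1`-valued function computed by a decision tree
of depth `d` on `s` Boolean inputs is a linear combination of monomials `∏_{i ∈ A} y_i` with
`|A| ≤ d`: a query node on `y_i` contributes `f₀ + y_i (f₁ - f₀)`. For `S ∈ 𝒢` the product
`P_S = ∏_{q ∈ S} f_q` therefore has degree at most `nk`, and `P_S (x T) = [S ⊆ T] = [S = T]`
since all members of `𝒢` have `n` elements. So the `P_S` are linearly independent in a space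
spanned by `∑_{i ≤ nk} (s choose i)` monomials. The numerical form follows from
`(m/n)^n ≤ (m choose n)` and the Chernoff-type bound `∑_{i ≤ d} (N choose i) ≤ (eN/d)^d`.
-/

open Finset

namespace BoolFun

variable (R : Type*) {σ : Type*} [CommRing R]

def monomial (A : Finset σ) : (σ → Bool) → R :=
  fun y => if ∀ i ∈ A, y i then 1 else 0

variable (σ) in
def degreeLE (d : ℕ) : Submodule R ((σ → Bool) → R) :=
  Submodule.span R (monomial R '' {A | A.card ≤ d})

variable {R}

lemma monomial_mul_monomial [DecidableEq σ] (A B : Finset σ) :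
    monomial R A * monomial R B = monomial R (A ∪ B) := by
  funext y
  simp only [Pi.mul_apply, monomial, forall_mem_union]
  split_ifs <;> simp_all

lemma monomial_mem_degreeLE {A : Finset σ} {d : ℕ} (h : A.card ≤ d) :
    monomial R A ∈ degreeLE R σ d :=
  Submodule.subset_span ⟨A, h, rfl⟩

lemma one_mem_degreeLE (d : ℕ) : (1 : (σ → Bool) → R) ∈ degreeLE R σ d := by
  convert monomial_mem_degreeLE (R := R) (A := (∅ : Finset σ)) (Nat.zero_le d)
  funext y
  simp [monomial]

lemma degreeLE_mono : Monotone (degreeLE R σ) := fun _ _ h =>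
  Submodule.span_mono (Set.image_mono fun _ hA => le_trans hA h)

lemma mul_mem_degreeLE {a b : ℕ} {f g : (σ → Bool) → R}
    (hf : f ∈ degreeLE R σ a) (hg : g ∈ degreeLE R σ b) :
    f * g ∈ degreeLE R σ (a + b) := by
  classical
  have hfg := Submodule.mul_mem_mul hf hg
  rw [degreeLE, degreeLE, Submodule.span_mul_span] at hfg
  refine Submodule.span_mono ?_ hfg
  rintro _ ⟨_, ⟨A, hA, rfl⟩, _, ⟨B, hB, rfl⟩, rfl⟩
  exact ⟨A ∪ B, (card_union_le A B).trans (add_le_add hA hB),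
    (monomial_mul_monomial A B).symm⟩

lemma prod_mem_degreeLE {ι : Type*} {d : ℕ} (F : Finset ι) {f : ι → (σ → Bool) → R}
    (hf : ∀ i ∈ F, f i ∈ degreeLE R σ d) :
    ∏ i ∈ F, f i ∈ degreeLE R σ (F.card * d) := by
  classical
  induction F using Finset.induction with
  | empty => simpa using one_mem_degreeLE 0
  | insert i F hi ih =>
    rw [prod_insert hi, card_insert_of_notMem hi, add_one_mul, add_comm]
    exact mul_mem_degreeLE (hf i (mem_insert_self i F))
      (ih fun j hj => hf j (mem_insert_of_mem hj))

lemma card_le_sum_choose_of_linearIndependent [Nontrivial R] [Fintype σ] {ι : Type*}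
    [Fintype ι] {d : ℕ} {v : ι → (σ → Bool) → R} (hv : LinearIndependent R v)
    (hmem : ∀ i, v i ∈ degreeLE R σ d) :
    Fintype.card ι ≤ ∑ i ∈ range (d + 1), (Fintype.card σ).choose i := by
  classical
  set 𝒜 := (range (d + 1)).biUnion fun i => powersetCard i (univ : Finset σ)
  have hspan : degreeLE R σ d ≤ Submodule.span R ↑(𝒜.image (monomial R)) := by
    refine Submodule.span_mono ?_
    rintro _ ⟨A, hA, rfl⟩
    exact mem_image_of_mem _ (mem_biUnion.2
      ⟨A.card, mem_range.2 (Nat.lt_succ_of_le hA), mem_powersetCard_univ.2 rfl⟩)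
  have hcard := linearIndependent_le_span' v hv _ (by
    rintro _ ⟨i, rfl⟩
    exact hspan (hmem i))
  simp only [Cardinal.mk_fintype, Nat.cast_le, Finset.coe_sort_coe, Fintype.card_coe] at hcard
  calc Fintype.card ι ≤ (𝒜.image (monomial R)).card := hcard
    _ ≤ 𝒜.card := card_image_le
    _ ≤ ∑ i ∈ range (d + 1), (powersetCard i (univ : Finset σ)).card := card_biUnion_le
    _ = ∑ i ∈ range (d + 1), (Fintype.card σ).choose i := by simp [card_powersetCard]

end BoolFun

open BoolFun

namespace BDTree

variable {s : ℕ}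

def indicator (R : Type*) [CommRing R] (t : BDTree s) : (Fin s → Bool) → R :=
  fun y => if t.eval y then 1 else 0

variable {R : Type*} [CommRing R]

lemma indicator_node (i : Fin s) (t₀ t₁ : BDTree s) :
    (node i t₀ t₁).indicator R =
      t₀.indicator R + monomial R {i} * (t₁.indicator R - t₀.indicator R) := by
  funext y
  by_cases hi : y i <;> simp [indicator, monomial, eval, hi]

lemma indicator_mem_degreeLE (t : BDTree s) :
    t.indicator R ∈ degreeLE R (Fin s) t.depth := by
  induction t with
  | leaf b =>
    cases b
    · rw [show (leaf false).indicator R = 0 from funext fun y => by simp [indicator, eval]]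
      exact zero_mem _
    · rw [show (leaf true).indicator R = 1 from funext fun y => by simp [indicator, eval]]
      exact one_mem_degreeLE _
  | node i t₀ t₁ ih₀ ih₁ =>
    rw [indicator_node, depth]
    have h₀ := degreeLE_mono (le_max_left t₀.depth t₁.depth) ih₀
    have h₁ := degreeLE_mono (le_max_right t₀.depth t₁.depth) ih₁
    refine Submodule.add_mem _ (degreeLE_mono (Nat.le_succ _) h₀) ?_
    rw [add_comm]
    exact mul_mem_degreeLE (monomial_mem_degreeLE (card_singleton i).le)
      (Submodule.sub_mem _ h₁ h₀)

end BDTree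

lemma prod_apply_eq_ite_subset {R X ι : Type*} [CommMonoidWithZero R] [DecidableEq ι]
    {f : ι → X → R} {T : Finset ι} {y : X}
    (hy : ∀ q, f q y = if q ∈ T then 1 else 0) (S : Finset ι) :
    (∏ q ∈ S, f q) y = if S ⊆ T then 1 else 0 := by
  rw [prod_apply]
  split_ifs with hST
  · exact prod_eq_one fun q hq => by simp [hy, hST hq]
  · obtain ⟨q, hqS, hqT⟩ := not_subset.mp hST
    exact prod_eq_zero hqS (by simp [hy, hqT])

lemma linearIndependent_of_apply_eq_ite {R X ι : Type*} [Semiring R] [DecidableEq ι]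
    {v : ι → X → R} (p : ι → X) (h : ∀ i j, v i (p j) = if i = j then 1 else 0) :
    LinearIndependent R v := by
  refine LinearIndependent.of_comp (LinearMap.funLeft R R p) ?_
  convert Pi.linearIndependent_single_one ι R
  funext j
  simp [LinearMap.funLeft, h, Pi.single_apply, eq_comm]

lemma Nat.pow_mul_factorial_le_pow_mul_descFactorial {m n : ℕ} (h : n ≤ m) :
    m ^ n * n.factorial ≤ n ^ n * m.descFactorial n := by
  have hprod (a b : ℕ) : a ^ n * ∏ i ∈ range n, (b - i) = ∏ i ∈ range n, a * (b - i) := by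
    rw [prod_mul_distrib, prod_const, card_range]
  rw [← Nat.descFactorial_self, Nat.descFactorial_eq_prod_range, Nat.descFactorial_eq_prod_range,
    hprod, hprod]
  refine prod_le_prod' fun i _ => ?_
  rw [Nat.mul_sub, Nat.mul_sub, mul_comm n m]
  exact Nat.sub_le_sub_left (Nat.mul_le_mul_right i h) _

lemma Nat.div_pow_le_choose {α : Type*} [Field α] [LinearOrder α] [IsStrictOrderedRing α]
    {m n : ℕ} (h : n ≤ m) : ((m : α) / n) ^ n ≤ m.choose n := by
  rcases n.eq_zero_or_pos with rfl | hn
  · simp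
  have hnat : m ^ n ≤ n ^ n * m.choose n := by
    refine Nat.le_of_mul_le_mul_right ?_ n.factorial_pos
    calc m ^ n * n.factorial ≤ n ^ n * m.descFactorial n :=
          pow_mul_factorial_le_pow_mul_descFactorial h
      _ = n ^ n * m.choose n * n.factorial := by rw [descFactorial_eq_factorial_mul_choose]; ring
  rw [div_pow, div_le_iff₀ (by positivity), mul_comm]
  exact_mod_cast hnat

open Real in
lemma sum_range_choose_le_exp_mul_div_pow {N d : ℕ} (h : d ≤ N) :
    ∑ i ∈ range (d + 1), (N.choose i : ℝ) ≤ (exp 1 * N / d) ^ d := by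
  rcases d.eq_zero_or_pos with rfl | hd
  · simp
  set x : ℝ := d / N
  have hN : 0 < N := hd.trans_le h
  have hx : 0 < x := by positivity
  have hx1 : x ≤ 1 := div_le_one_of_le₀ (by exact_mod_cast h) (Nat.cast_nonneg N)
  suffices x ^ d * ∑ i ∈ range (d + 1), (N.choose i : ℝ) ≤ exp 1 ^ d by
    rwa [← le_div_iff₀' (by positivity), ← div_pow, div_div_eq_mul_div] at this
  -- Weight the terms by `x ^ i ≥ x ^ d` and compare with `(1 + x) ^ N ≤ exp (N x) = exp d`.
  calc x ^ d * ∑ i ∈ range (d + 1), (N.choose i : ℝ)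
      ≤ ∑ i ∈ range (d + 1), x ^ i * N.choose i := by
        rw [mul_sum]
        refine sum_le_sum fun i hi => mul_le_mul_of_nonneg_right ?_ (Nat.cast_nonneg _)
        exact pow_le_pow_of_le_one hx.le hx1 (Nat.lt_succ_iff.mp (mem_range.mp hi))
    _ ≤ ∑ i ∈ range (N + 1), x ^ i * N.choose i :=
        sum_le_sum_of_subset_of_nonneg (range_subset_range.mpr (by omega))
          fun _ _ _ => by positivity
    _ = (x + 1) ^ N := by rw [add_pow]; simp
    _ ≤ exp x ^ N := by gcongr; exact add_one_le_exp x
    _ = exp 1 ^ d := by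
        rw [← exp_nat_mul, ← exp_nat_mul, mul_one]
        congr 1
        simp only [x]
        field_simp

open Real in
lemma sum_range_choose_le_exp_mul_add_div_pow (s d : ℕ) :
    ∑ i ∈ range (d + 1), (s.choose i : ℝ) ≤ (exp 1 * (s + d) / d) ^ d :=
  calc ∑ i ∈ range (d + 1), (s.choose i : ℝ)
      ≤ ∑ i ∈ range (d + 1), ((s + d).choose i : ℝ) :=
        sum_le_sum fun i _ => by exact_mod_cast Nat.choose_le_choose i (Nat.le_add_right s d)
    _ ≤ (exp 1 * (s + d) / d) ^ d := by
        exact_mod_cast sum_range_choose_le_exp_mul_div_pow (Nat.le_add_left d s)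

theorem approximate_storage_lower_bound_general (m n s k : ℕ)
    (hnm : n ≤ m)
    (𝒢 : Finset (Finset (Fin m)))
    (hcard : ∀ S ∈ 𝒢, S.card = n)
    (hsize : (m.choose n : ℝ) / 2 ≤ (𝒢.card : ℝ))
    (x : {S // S ∈ 𝒢} → (Fin s → Bool))
    (tree : Fin m → BDTree s)
    (hdepth : ∀ q, (tree q).depth ≤ k)
    (hcorrect : ∀ S : {S // S ∈ 𝒢}, ∀ q : Fin m,
      (tree q).eval (x S) = true ↔ q ∈ S.1) :
    𝒢.card ≤ ∑ i ∈ Finset.range (n * k + 1), s.choose i ∧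
    (1 / 2 : ℝ) * ((m : ℝ) / n) ^ n
      ≤ (Real.exp 1 * ((s : ℝ) + n * k) / (n * k)) ^ (n * k) := by
  set P : 𝒢 → (Fin s → Bool) → ZMod 2 :=
    fun S => ∏ q ∈ S.1, (tree q).indicator (ZMod 2)
  have hdeg (S : 𝒢) : P S ∈ degreeLE (ZMod 2) (Fin s) (n * k) := by
    rw [← hcard S.1 S.2]
    exact prod_mem_degreeLE S.1 fun q _ =>
      degreeLE_mono (hdepth q) (BDTree.indicator_mem_degreeLE _)
  have hdelta (S T : 𝒢) : P S (x T) = if S = T then 1 else 0 := by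
    have hsub : S.1 ⊆ T.1 ↔ S = T :=
      ⟨fun h => Subtype.ext (eq_of_subset_of_card_le h (by rw [hcard _ S.2, hcard _ T.2])),
        fun h => h ▸ subset_refl _⟩
    have hmember (q : Fin m) : (tree q).indicator (ZMod 2) (x T) = if q ∈ T.1 then 1 else 0 := by
      simp [BDTree.indicator, hcorrect T q]
    simp only [P, prod_apply_eq_ite_subset hmember, hsub]
  have hcount : 𝒢.card ≤ ∑ i ∈ range (n * k + 1), s.choose i := by
    simpa using card_le_sum_choose_of_linearIndependent
      (linearIndependent_of_apply_eq_ite x hdelta) hdeg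
  refine ⟨hcount, ?_⟩
  calc (1 / 2 : ℝ) * ((m : ℝ) / n) ^ n ≤ m.choose n / 2 := by
        linarith [Nat.div_pow_le_choose (α := ℝ) hnm]
    _ ≤ 𝒢.card := hsize
    _ ≤ ∑ i ∈ range (n * k + 1), (s.choose i : ℝ) := by exact_mod_cast hcount
    _ ≤ _ := by exact_mod_cast sum_range_choose_le_exp_mul_add_div_pow s (n * k)

theorem approximate_storage_lower_bound (m n s k : ℕ)
    (hn : 1 ≤ n) (hnm : n ≤ m) (hk : 1 ≤ k)
    (𝒢 : Finset (Finset (Fin m)))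
    (hcard : ∀ S ∈ 𝒢, S.card = n)
    (hsize : (m.choose n : ℝ) / 2 ≤ (𝒢.card : ℝ))
    (x : {S // S ∈ 𝒢} → (Fin s → Bool))
    (tree : Fin m → BDTree s)
    (hdepth : ∀ q, (tree q).depth ≤ k)
    (hcorrect : ∀ S : {S // S ∈ 𝒢}, ∀ q : Fin m,
      (tree q).eval (x S) = true ↔ q ∈ S.1) :
    𝒢.card ≤ ∑ i ∈ Finset.range (n * k + 1), s.choose i ∧
    (1 / 2 : ℝ) * ((m : ℝ) / n) ^ n
      ≤ (Real.exp 1 * ((s : ℝ) + n * k) / (n * k)) ^ (n * k) :=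
  approximate_storage_lower_bound_general m n s k hnm 𝒢 hcard hsize x tree hdepth hcorrect
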